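/- arXiv:1904.05174 — 2 statements merged into one kernel-verified Lean document; each statement's English description precedes it below -/
import Mathlib

section
/- Let p be an odd prime. The automorphism group of the group DihedralGroup p × ZMod p of order 2p^2 has order p(p-1)^2. -/
/-!
The centre of `D_p × C_p` is `1 × C_p`, because `D_p` has trivial centre, and every homomorphism
`D_p → C_p` is trivial, because `D_p` is generated by involutions and `p` is odd. Hence every
automorphism preserves both factors and `Aut (D_p × C_p) = Aut D_p × Aut C_p`. An automorphism of
`D_n` (`n > 2`) sends `r 1` to an element of order `n`, i.e. to `r a` with `a` a unit, and `sr 0`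
to a reflection `sr b`; each such pair `(a, b)` occurs, so `|Aut D_p| = p (p - 1)`, while
`|Aut C_p| = p - 1`.
-/

namespace MulAut

variable {H K : Type*} [Group H] [CommGroup K]

theorem apply_mk_one (hHK : ∀ f : H →* K, f = 1) (φ : MulAut (H × K)) (a : H) :
    φ (a, 1) = ((φ (a, 1)).1, 1) :=
  Prod.ext rfl <| DFunLike.congr_fun
    (hHK ((MonoidHom.snd H K).comp ((φ : H × K →* H × K).comp (MonoidHom.inl H K)))) a

theorem apply_one_mk (hH : Subgroup.center H = ⊥) (φ : MulAut (H × K)) (b : K) :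
    φ (1, b) = (1, (φ (1, b)).2) := by
  have hb : (1, b) ∈ Subgroup.center (H × K) := by
    rw [Subgroup.center_prod]
    exact ⟨Subgroup.one_mem _, Subgroup.mem_center_iff.mpr fun k => mul_comm k b⟩
  have hφb : φ (1, b) ∈ Subgroup.center (H × K) := MulEquivClass.apply_mem_center φ hb
  rw [Subgroup.center_prod, hH] at hφb
  exact Prod.ext (Subgroup.mem_bot.mp hφb.1) rfl

variable (H K) in
def fstRestrict (φ : MulAut (H × K)) : H →* H :=
  (MonoidHom.fst H K).comp ((φ : H × K →* H × K).comp (MonoidHom.inl H K))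

variable (H K) in
def sndRestrict (φ : MulAut (H × K)) : K →* K :=
  (MonoidHom.snd H K).comp ((φ : H × K →* H × K).comp (MonoidHom.inr H K))

theorem prodCongr_bijective (hH : Subgroup.center H = ⊥) (hHK : ∀ f : H →* K, f = 1) :
    Function.Bijective fun αβ : MulAut H × MulAut K => αβ.1.prodCongr αβ.2 := by
  constructor
  · rintro ⟨α, β⟩ ⟨α', β'⟩ h
    exact Prod.ext (MulEquiv.ext fun a => congr_arg (fun φ : MulAut (H × K) => (φ (a, 1)).1) h)
      (MulEquiv.ext fun b => congr_arg (fun φ : MulAut (H × K) => (φ (1, b)).2) h)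
  · intro φ
    let α : MulAut H := (fstRestrict H K φ).toMulEquiv (fstRestrict H K φ.symm)
      (by ext a; simp [fstRestrict, ← apply_mk_one hHK])
      (by ext a; simp [fstRestrict, ← apply_mk_one hHK])
    let β : MulAut K := (sndRestrict H K φ).toMulEquiv (sndRestrict H K φ.symm)
      (by ext b; simp [sndRestrict, ← apply_one_mk hH])
      (by ext b; simp [sndRestrict, ← apply_one_mk hH])
    refine ⟨(α, β), (MulEquiv.ext fun ⟨a, b⟩ => ?_).symm⟩
    calc φ (a, b) = φ (a, 1) * φ (1, b) := by rw [← map_mul, Prod.mk_mul_mk, mul_one, one_mul]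
      _ = ((φ (a, 1)).1, (φ (1, b)).2) := by
        rw [apply_mk_one hHK, apply_one_mk hH, Prod.mk_mul_mk, mul_one, one_mul]

theorem card_prod (hH : Subgroup.center H = ⊥) (hHK : ∀ f : H →* K, f = 1) :
    Nat.card (MulAut (H × K)) = Nat.card (MulAut H) * Nat.card (MulAut K) := by
  rw [← Nat.card_prod, Nat.card_eq_of_bijective _ (prodCongr_bijective hH hHK)]

end MulAut

namespace DihedralGroup

variable {n : ℕ}

theorem hom_ext {G : Type*} [Group G] {f g : DihedralGroup n →* G}
    (hr : f (r 1) = g (r 1)) (hsr : f (sr 0) = g (sr 0)) : f = g := by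
  have hrot (i : ZMod n) : f (r i) = g (r i) := by
    rw [← ZMod.intCast_zmod_cast i, ← r_one_zpow, map_zpow, map_zpow, hr]
  ext (i | i)
  · exact hrot i
  · rw [← zero_add i, ← sr_mul_r, map_mul, map_mul, hsr, hrot]

theorem hom_eq_one_of_odd_card {G : Type*} [Group G] (hG : Odd (Nat.card G))
    (f : DihedralGroup n →* G) : f = 1 := by
  have hsr (i : ZMod n) : f (sr i) = 1 := by
    rw [← orderOf_eq_one_iff]
    exact Nat.eq_one_of_dvd_coprimes (Nat.coprime_two_left.mpr hG)
      ((orderOf_map_dvd f (sr i)).trans (orderOf_sr i).dvd) (orderOf_dvd_natCard _)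
  refine hom_ext ?_ (hsr 0)
  rw [← sub_zero (1 : ZMod n), ← sr_mul_sr, map_mul, hsr, hsr, one_mul, MonoidHom.one_apply]

def affineAut (a : (ZMod n)ˣ) (b : ZMod n) : MulAut (DihedralGroup n) where
  toFun
    | r i => r (a * i)
    | sr i => sr (b + a * i)
  invFun
    | r i => r (↑a⁻¹ * i)
    | sr i => sr (↑a⁻¹ * (i - b))
  left_inv := by rintro (i | i) <;> simp
  right_inv := by rintro (i | i) <;> simp
  map_mul' := by
    rintro (i | i) (j | j) <;> simp only [r_mul_r, r_mul_sr, sr_mul_r, sr_mul_sr] <;> ring_nf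

@[simp] theorem affineAut_r (a : (ZMod n)ˣ) (b i : ZMod n) :
    affineAut a b (r i) = r ((a : ZMod n) * i) := rfl

@[simp] theorem affineAut_sr (a : (ZMod n)ˣ) (b i : ZMod n) :
    affineAut a b (sr i) = sr (b + (a : ZMod n) * i) := rfl

theorem affineAut_injective :
    Function.Injective fun ab : (ZMod n)ˣ × ZMod n => affineAut ab.1 ab.2 := by
  rintro ⟨a, b⟩ ⟨a', b'⟩ h
  have ha := congr_arg (fun φ : MulAut (DihedralGroup n) => φ (r 1)) h
  have hb := congr_arg (fun φ : MulAut (DihedralGroup n) => φ (sr 0)) h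
  simp only [affineAut_r, affineAut_sr, mul_one, mul_zero, add_zero, r.injEq, sr.injEq] at ha hb
  exact Prod.ext (Units.ext ha) hb

theorem exists_apply_r_one (hn : 2 < n) (φ : MulAut (DihedralGroup n)) :
    ∃ a : (ZMod n)ˣ, φ (r 1) = r a := by
  have : NeZero n := ⟨by omega⟩
  have hord : orderOf (φ (r 1)) = n := by rw [MulEquiv.orderOf_eq, orderOf_r_one]
  rcases h : φ (r 1) with a | i
  · rw [h, orderOf_r, Nat.div_eq_self] at hord
    have hunit : IsUnit (a.val : ZMod n) := (ZMod.isUnit_iff_coprime _ _).mpr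
      (Nat.coprime_comm.mp (hord.resolve_left (by omega)))
    rw [ZMod.natCast_zmod_val] at hunit
    exact ⟨hunit.unit, rfl⟩
  · rw [h, orderOf_sr] at hord
    omega

theorem exists_apply_sr_zero (hn : 2 < n) (φ : MulAut (DihedralGroup n)) :
    ∃ b : ZMod n, φ (sr 0) = sr b := by
  have : Fact (2 < n) := ⟨hn⟩
  obtain ⟨a, ha⟩ := exists_apply_r_one hn φ
  rcases h : φ (sr 0) with c | b
  · -- a rotation would commute with `φ (r 1)`, but `sr 0` does not commute with `r 1`
    have hcomm : r 1 * sr 0 = sr 0 * r 1 :=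
      φ.injective (by rw [map_mul, map_mul, ha, h, r_mul_r, r_mul_r, add_comm])
    simp only [r_mul_sr, sr_mul_r, zero_sub, zero_add, sr.injEq] at hcomm
    exact absurd hcomm ZMod.neg_one_ne_one
  · exact ⟨b, rfl⟩

theorem affineAut_surjective (hn : 2 < n) :
    Function.Surjective fun ab : (ZMod n)ˣ × ZMod n => affineAut ab.1 ab.2 := by
  intro φ
  obtain ⟨a, ha⟩ := exists_apply_r_one hn φ
  obtain ⟨b, hb⟩ := exists_apply_sr_zero hn φ
  refine ⟨(a, b), MulEquiv.toMonoidHom_injective (hom_ext ?_ ?_)⟩ <;> simp [ha, hb]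

theorem card_mulAut (hn : 2 < n) : Nat.card (MulAut (DihedralGroup n)) = n * n.totient := by
  have : NeZero n := ⟨by omega⟩
  rw [← Nat.card_eq_of_bijective _ ⟨affineAut_injective, affineAut_surjective hn⟩, Nat.card_prod,
    Nat.card_zmod, Nat.card_eq_fintype_card, ZMod.card_units_eq_totient, mul_comm]

end DihedralGroup

/-- The automorphism group of `DihedralGroup p × ZMod p` (`p` an odd prime), a group of
order `2 p ^ 2`, has order `p (p-1)^2`. -/
theorem card_mulAut_dihedral_prod_cyclic (p : ℕ) (hp : p.Prime) (hodd : Odd p) :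
    Nat.card (MulAut (DihedralGroup p × Multiplicative (ZMod p))) = p * (p - 1) ^ 2 := by
  have : NeZero p := ⟨hp.ne_zero⟩
  have hcard : Nat.card (Multiplicative (ZMod p)) = p := by
    rw [Nat.card_congr Multiplicative.toAdd, Nat.card_zmod]
  have htwo : 2 < p := by
    obtain ⟨k, rfl⟩ := hodd
    have := hp.two_le
    omega
  rw [MulAut.card_prod (DihedralGroup.center_eq_bot_of_odd_ne_one hodd hp.one_lt.ne')
      (DihedralGroup.hom_eq_one_of_odd_card (by rwa [hcard])),
    DihedralGroup.card_mulAut htwo, IsCyclic.card_mulAut, hcard, Nat.totient_prime hp]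
  ring
end

section
/- Let p be an odd prime, and let W = ZMod p × DihedralGroup p (a group of order 2p^2). The holomorph Hol(W) contains a subgroup that is isomorphic to ZMod p × ZMod (2p) and acts regularly on W. -/
/-!
Left and right translations commute, so every map `x ↦ a * x * b⁻¹` normalizes the left regular
representation. Hence for homomorphisms `α β : G →* X` the bi-translation action
`g • x = α g * x * (β g)⁻¹` of `G` lands in `Hol X`, and when it is simply transitive its image
is a regular subgroup isomorphic to `G`. For `W = C × Dₙ`, let `C` translate the first factor and
let `C₂ × Cₙ` act on `Dₙ` by `d ↦ s^ε * d * r^(-k)`; this is simply transitive, and for odd `p`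
the group `Cₚ × C₂ × Cₚ` is `Cₚ × C₂ₚ` by the Chinese remainder theorem.
-/

def Hol (X : Type*) [Group X] : Subgroup (Equiv.Perm X) :=
  Subgroup.normalizer ((MulAction.toPermHom X X).range : Set (Equiv.Perm X))

def IsRegularSubgroup {X : Type*} (S : Subgroup (Equiv.Perm X)) : Prop :=
  (∀ x y : X, ∃ s ∈ S, s x = y) ∧ ∀ s ∈ S, ∀ x : X, s x = x → s = 1

lemma isRegularSubgroup_range {G X : Type*} [Group G] (f : G →* Equiv.Perm X)
    (htrans : ∀ x y, ∃ g, f g x = y) (hfree : ∀ g x, f g x = x → g = 1) :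
    IsRegularSubgroup f.range := by
  refine ⟨fun x y => ?_, ?_⟩
  · obtain ⟨g, hg⟩ := htrans x y
    exact ⟨f g, ⟨g, rfl⟩, hg⟩
  · rintro _ ⟨g, rfl⟩ x hx
    rw [hfree g x hx, map_one]

lemma injective_of_free {G X : Type*} [Group G] [Nonempty X] (f : G →* Equiv.Perm X)
    (hfree : ∀ g x, f g x = x → g = 1) : Function.Injective f := by
  refine (injective_iff_map_eq_one f).mpr fun g hg => ?_
  obtain ⟨x⟩ := ‹Nonempty X›
  exact hfree g x (by rw [hg]; rfl)

section BiTranslation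

variable {G X : Type*} [Group G] [Group X]

lemma toPerm_mem_hol (a : X) : MulAction.toPerm a ∈ Hol X :=
  Subgroup.le_normalizer ⟨a, rfl⟩

lemma mulRight_mem_hol (b : X) : Equiv.mulRight b ∈ Hol X := by
  refine Subgroup.centralizer_le_normalizer _ (Subgroup.mem_centralizer_iff.mpr ?_)
  rintro _ ⟨a, rfl⟩
  ext x
  exact (mul_assoc a x b).symm

def biTranslation (α β : G →* X) : G →* Equiv.Perm X where
  toFun g := Equiv.mulRight (β g)⁻¹ * MulAction.toPerm (α g)
  map_one' := by ext; simp
  map_mul' g h := by ext; simp [mul_assoc]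

lemma range_biTranslation_le_hol (α β : G →* X) : (biTranslation α β).range ≤ Hol X := by
  rintro _ ⟨g, rfl⟩
  exact mul_mem (mulRight_mem_hol _) (toPerm_mem_hol _)

theorem exists_regular_subgroup_hol_of_biTranslation (α β : G →* X)
    (htrans : ∀ x y : X, ∃ g, α g * x * (β g)⁻¹ = y)
    (hfree : ∀ g x, α g * x * (β g)⁻¹ = x → g = 1) :
    ∃ S : Subgroup (Equiv.Perm X), S ≤ Hol X ∧ Nonempty (S ≃* G) ∧ IsRegularSubgroup S :=
  ⟨_, range_biTranslation_le_hol α β,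
    ⟨(MonoidHom.ofInjective (injective_of_free (biTranslation α β) hfree)).symm⟩,
    isRegularSubgroup_range _ htrans hfree⟩

end BiTranslation

namespace DihedralGroup

variable {n : ℕ}

def rHom : Multiplicative (ZMod n) →* DihedralGroup n where
  toFun i := r i.toAdd
  map_one' := rfl
  map_mul' _ _ := (r_mul_r _ _).symm

def srZeroHom : Multiplicative (ZMod 2) →* DihedralGroup n where
  toFun e := sr 0 ^ e.toAdd.val
  map_one' := rfl
  map_mul' a b := by
    rw [← pow_add, toAdd_mul, ZMod.val_add]
    simpa only [orderOf_sr] using pow_mod_orderOf (sr (0 : ZMod n)) (a.toAdd.val + b.toAdd.val)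

@[simp]
lemma rHom_apply (i : Multiplicative (ZMod n)) : rHom i = r i.toAdd :=
  rfl

@[simp]
lemma srZeroHom_ofAdd_one : srZeroHom (.ofAdd 1) = (sr 0 : DihedralGroup n) :=
  pow_one _

lemma exists_srZeroHom_mul_mul_rHom_inv (d d' : DihedralGroup n) :
    ∃ e k, srZeroHom e * d * (rHom k)⁻¹ = d' := by
  rcases d with i | i <;> rcases d' with j | j
  · exact ⟨1, .ofAdd (i - j), by simp⟩
  · exact ⟨.ofAdd 1, .ofAdd (i - j), by simp⟩
  · exact ⟨.ofAdd 1, .ofAdd (i - j), by simp⟩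
  · exact ⟨1, .ofAdd (i - j), by simp⟩

lemma eq_one_of_srZeroHom_mul_mul_rHom_inv_eq {e : Multiplicative (ZMod 2)}
    {k : Multiplicative (ZMod n)} {d : DihedralGroup n} (h : srZeroHom e * d * (rHom k)⁻¹ = d) :
    e = 1 ∧ k = 1 := by
  obtain ⟨e, rfl⟩ := Multiplicative.ofAdd.surjective e
  obtain ⟨k, rfl⟩ := Multiplicative.ofAdd.surjective k
  rcases (by decide : ∀ x : ZMod 2, x = 0 ∨ x = 1) e with rfl | rfl <;>
    rcases d with i | i <;> simp_all

end DihedralGroup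

open DihedralGroup in
theorem exists_regular_subgroup_hol_prod_dihedral (C : Type*) [Group C] (n : ℕ) :
    ∃ S : Subgroup (Equiv.Perm (C × DihedralGroup n)), S ≤ Hol (C × DihedralGroup n) ∧
      Nonempty (S ≃* C × Multiplicative (ZMod 2) × Multiplicative (ZMod n)) ∧
      IsRegularSubgroup S := by
  refine exists_regular_subgroup_hol_of_biTranslation
    (.prodMap (.id C) (srZeroHom.comp (.fst _ _))) (.prodMap 1 (rHom.comp (.snd _ _)))
    (fun ⟨c, d⟩ ⟨c', d'⟩ => ?_) (fun ⟨a, e, k⟩ ⟨c, d⟩ h => ?_)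
  · obtain ⟨e, k, hd⟩ := exists_srZeroHom_mul_mul_rHom_inv d d'
    exact ⟨(c' * c⁻¹, e, k), by simpa using hd⟩
  · simp only [Prod.ext_iff, Prod.fst_mul, Prod.snd_mul, Prod.fst_inv, Prod.snd_inv,
      MonoidHom.coe_prodMap, Prod.map_fst, Prod.map_snd] at h
    obtain ⟨he, hk⟩ := eq_one_of_srZeroHom_mul_mul_rHom_inv_eq h.2
    simp_all

theorem abelian_regular_in_hol_cyclic_prod_dihedral_general (p : ℕ) (hodd : Odd p) :
    ∃ S : Subgroup (Equiv.Perm (Multiplicative (ZMod p) × DihedralGroup p)),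
      S ≤ Hol (Multiplicative (ZMod p) × DihedralGroup p) ∧
      Nonempty (↥S ≃* Multiplicative (ZMod p × ZMod (2 * p))) ∧
      IsRegularSubgroup S := by
  obtain ⟨S, hS, ⟨e⟩, hreg⟩ :=
    exists_regular_subgroup_hol_prod_dihedral (Multiplicative (ZMod p)) p
  have crt : Multiplicative (ZMod p) × Multiplicative (ZMod 2) × Multiplicative (ZMod p) ≃*
      Multiplicative (ZMod p × ZMod (2 * p)) :=
    ((MulEquiv.refl _).prodCongr (MulEquiv.prodMultiplicative _ _).symm).trans <|
      (MulEquiv.prodMultiplicative _ _).symm.trans <| AddEquiv.toMultiplicative <|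
        ((AddEquiv.refl _).prodCongr
          (ZMod.chineseRemainder (Nat.coprime_two_left.mpr hodd)).toAddEquiv).symm
  exact ⟨S, hS, ⟨e.trans crt⟩, hreg⟩

/-- For `p` an odd prime, the holomorph of `W = ZMod p × DihedralGroup p` contains a
subgroup isomorphic to `ZMod p × ZMod (2p)` acting regularly on `W`. -/
theorem abelian_regular_in_hol_cyclic_prod_dihedral (p : ℕ) (hp : p.Prime) (hodd : Odd p) :
    ∃ S : Subgroup (Equiv.Perm (Multiplicative (ZMod p) × DihedralGroup p)),
      S ≤ Hol (Multiplicative (ZMod p) × DihedralGroup p) ∧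
      Nonempty (↥S ≃* Multiplicative (ZMod p × ZMod (2 * p))) ∧
      IsRegularSubgroup S :=
  abelian_regular_in_hol_cyclic_prod_dihedral_general p hodd
end
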